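/- Let y: [0,∞) → ℝ≥0 be differentiable and satisfy y'(t) ≤ (a y(t) − b) y(t) for all t ≥ 0, where a, b > 0. If y(0) ≤ b/(2a), then y is nonincreasing and y(t) ≤ y(0) e^{−(b/2) t} for all t ≥ 0. -/

import Mathlib

/-!
At a time where `y = b/(2a)` the inequality gives `y' ≤ -(b/2) y < 0`, so `y` can never cross
the level `b/(2a)` upwards. Below that level `(a y - b) y ≤ -(b/2) y`, hence `y' ≤ -(b/2) y ≤ 0`,
and Grönwall's inequality gives the exponential decay.
-/

open Set Filter Topology Real

section

variable {f f' : ℝ → ℝ} {t₀ : ℝ}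

theorem le_const_of_hasDerivAt_neg_of_eq {c : ℝ} (hf : ∀ t ∈ Ici t₀, HasDerivAt f (f' t) t)
    (h₀ : f t₀ ≤ c) (hc : ∀ t ∈ Ici t₀, f t = c → f' t < 0) : ∀ t ∈ Ici t₀, f t ≤ c := by
  intro t ht
  refine image_le_of_deriv_right_lt_deriv_boundary (B := fun _ ↦ c) (B' := 0)
    (fun s hs ↦ (hf s hs.1).continuousAt.continuousWithinAt)
    (fun s hs ↦ (hf s hs.1).hasDerivWithinAt) h₀ (fun _ ↦ hasDerivAt_const _ c)
    (fun s hs ↦ hc s hs.1) ⟨ht, le_rfl⟩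

theorem le_mul_exp_of_hasDerivAt_le_mul {K : ℝ} (hf : ∀ t ∈ Ici t₀, HasDerivAt f (f' t) t)
    (bound : ∀ t ∈ Ici t₀, f' t ≤ K * f t) : ∀ t ∈ Ici t₀, f t ≤ f t₀ * exp (K * (t - t₀)) := by
  intro t ht
  rw [← gronwallBound_ε0]
  refine le_gronwallBound_of_liminf_deriv_right_le
    (fun s hs ↦ (hf s hs.1).continuousAt.continuousWithinAt)
    (fun s hs _ hr ↦ (hf s hs.1).hasDerivWithinAt.liminf_right_slope_le hr) le_rfl
    (fun s hs ↦ by simpa using bound s hs.1) t ⟨ht, le_rfl⟩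

end

/-- Nonlinear Gronwall: if `y' ≤ (a y - b) y` with `a, b > 0` and `y(0) ≤ b/(2a)`,
then `y` is nonincreasing on `[0,∞)` and `y(t) ≤ y(0) e^{-(b/2) t}`. -/
theorem nonlinear_gronwall (y : ℝ → ℝ) (a b : ℝ) (ha : 0 < a) (hb : 0 < b)
    (hy : Differentiable ℝ y)
    (hpos : ∀ t, 0 ≤ t → 0 ≤ y t)
    (hineq : ∀ t, 0 ≤ t → deriv y t ≤ (a * y t - b) * y t)
    (hinit : y 0 ≤ b / (2 * a)) :
    AntitoneOn y (Set.Ici 0) ∧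
      ∀ t, 0 ≤ t → y t ≤ y 0 * Real.exp (-(b / 2) * t) := by
  have hy' : ∀ t ∈ Ici (0 : ℝ), HasDerivAt y (deriv y t) t := fun t _ ↦ (hy t).hasDerivAt
  have hac : a * (b / (2 * a)) = b / 2 := by field_simp
  have hle : ∀ t ∈ Ici (0 : ℝ), y t ≤ b / (2 * a) := by
    refine le_const_of_hasDerivAt_neg_of_eq hy' hinit fun t ht hyt ↦ ?_
    have hderiv := hineq t ht
    rw [hyt, hac] at hderiv
    nlinarith [div_pos hb (mul_pos two_pos ha)]
  have hdecay : ∀ t ∈ Ici (0 : ℝ), deriv y t ≤ -(b / 2) * y t := fun t ht ↦ by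
    have hay : a * y t ≤ b / 2 := hac ▸ mul_le_mul_of_nonneg_left (hle t ht) ha.le
    nlinarith [hineq t ht, hpos t ht]
  refine ⟨antitoneOn_of_hasDerivWithinAt_nonpos (convex_Ici 0) hy.continuous.continuousOn
    (fun t _ ↦ (hy t).hasDerivAt.hasDerivWithinAt) fun t ht ↦ ?_, fun t ht ↦ ?_⟩
  · rw [interior_Ici] at ht
    nlinarith [hdecay t (mem_Ici.2 ht.le), hpos t ht.le]
  · simpa using le_mul_exp_of_hasDerivAt_le_mul hy' hdecay t ht
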